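/- arXiv:2503.16987 — 4 statements merged into one kernel-verified Lean document; each statement's English description precedes it below -/
import Mathlib

section
/- Let G be a group, s ∈ G, T an abelian subgroup of G normalized by s (i.e., sTs⁻¹ = T), and m, k coprime positive integers with s^m ∈ T. If the k-th power map P_k : T → T is surjective, then the k-th power map on the centralizer Z_T(s) = {t ∈ T : st = ts} is surjective, i.e., every element of Z_T(s) has a k-th root in Z_T(s). -/
/-!
Take a `k`-th root `y ∈ T` of `x`. Since `s ^ m` centralizes the abelian group `T`, conjugation
`σ` by `s` satisfies `σ ^ m = 1` on `T`, so the norm `z = ∏_{i < m} σ^i y` is fixed by `σ`,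
and `z ^ k = x ^ m` because `σ` fixes `x`. With a Bézout relation `m a + k b = 1`, the element
`z ^ a * x ^ b` is fixed by `σ` and is a `k`-th root of `x`.
-/

open Finset

theorem exists_mem_pow_eq_of_pow_eq_pow {A : Type*} [CommGroup A] {H : Subgroup A} {x z : A}
    (hx : x ∈ H) (hz : z ∈ H) {m k : ℕ} (hcop : m.Coprime k) (h : z ^ k = x ^ m) :
    ∃ w ∈ H, w ^ k = x := by
  set a := m.gcdA k
  set b := m.gcdB k
  have bezout : (m : ℤ) * a + k * b = 1 := by
    rw [← Nat.gcd_eq_gcd_ab, hcop, Nat.cast_one]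
  refine ⟨z ^ a * x ^ b, H.mul_mem (H.zpow_mem hz _) (H.zpow_mem hx _), ?_⟩
  calc (z ^ a * x ^ b) ^ k
      = (z ^ k) ^ a * x ^ ((k : ℤ) * b) := by
        rw [mul_pow, ← zpow_natCast, ← zpow_natCast, ← zpow_natCast, ← zpow_mul, ← zpow_mul,
          ← zpow_mul, mul_comm a, mul_comm b]
    _ = x := by
        rw [h, ← zpow_natCast, ← zpow_mul, ← zpow_add, bezout, zpow_one]

section NormElement

variable {M A : Type*} [Monoid M]

theorem smul_prod_range_pow_smul_eq_self [CancelCommMonoid A] [MulDistribMulAction M A] {σ : M}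
    {y : A} {m : ℕ} (hy : σ ^ m • y = y) :
    σ • ∏ i ∈ range m, σ ^ i • y = ∏ i ∈ range m, σ ^ i • y := by
  have key := prod_range_succ' (fun i => σ ^ i • y) m
  rw [prod_range_succ, hy, pow_zero, one_smul] at key
  simp_rw [smul_prod', smul_smul, ← pow_succ']
  exact (mul_right_cancel key).symm

theorem prod_range_pow_smul_pow [CommMonoid A] [MulDistribMulAction M A] {σ : M} {x y : A}
    (hx : σ • x = x) (m k : ℕ) (hy : y ^ k = x) :
    (∏ i ∈ range m, σ ^ i • y) ^ k = x ^ m := by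
  have hfix (i : ℕ) : σ ^ i • x = x := by
    rw [← smul_iterate_apply]
    exact Function.iterate_fixed hx i
  simp_rw [← prod_pow, ← smul_pow', hy, hfix, prod_const, card_range]

theorem exists_smul_eq_self_and_pow_eq [CommGroup A] [MulDistribMulAction M A] {σ : M} {m k : ℕ}
    (hcop : m.Coprime k) {x y : A} (hx : σ • x = x) (hy : y ^ k = x) (hσy : σ ^ m • y = y) :
    ∃ w, σ • w = w ∧ w ^ k = x :=
  exists_mem_pow_eq_of_pow_eq_pow (H := (MulDistribMulAction.toMonoidHom A σ).eqLocus (.id A))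
    hx (smul_prod_range_pow_smul_eq_self hσy) hcop (prod_range_pow_smul_pow hx m k hy)

end NormElement

theorem stmt1_general {G : Type*} [Group G] (T : Subgroup G) (s : G) (m k : ℕ)
    (hcop : Nat.Coprime m k)
    (habelian : ∀ a ∈ T, ∀ b ∈ T, a * b = b * a)
    (hnorm : ∀ t : G, t ∈ T ↔ s * t * s⁻¹ ∈ T)
    (hsm : s ^ m ∈ T)
    (hsurj : ∀ x ∈ T, ∃ y ∈ T, y ^ k = x) :
    ∀ x ∈ T, s * x = x * s → ∃ y ∈ T, s * y = y * s ∧ y ^ k = x := by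
  intro x hxT hxs
  let _ : CommGroup T := { mul_comm a b := Subtype.ext (habelian _ a.2 _ b.2) }
  let σ : Subgroup.normalizer (T : Set G) := ⟨s, Subgroup.mem_normalizer_iff.mpr hnorm⟩
  have smul_val (t : T) : ((σ • t : T) : G) = s * t * s⁻¹ := rfl
  have pow_smul_val (n : ℕ) (t : T) : ((σ ^ n • t : T) : G) = s ^ n * t * (s ^ n)⁻¹ := rfl
  obtain ⟨y, hyT, hyk⟩ := hsurj x hxT
  have hσx : σ • (⟨x, hxT⟩ : T) = ⟨x, hxT⟩ :=
    Subtype.ext <| (smul_val _).trans (mul_inv_eq_of_eq_mul hxs)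
  have hσy : σ ^ m • (⟨y, hyT⟩ : T) = ⟨y, hyT⟩ := Subtype.ext <| by
    rw [pow_smul_val, habelian _ hsm _ hyT, mul_inv_cancel_right]
  obtain ⟨w, hσw, hwk⟩ := exists_smul_eq_self_and_pow_eq hcop hσx (Subtype.ext hyk) hσy
  exact ⟨w, w.2, mul_inv_eq_iff_eq_mul.mp <| (smul_val w).symm.trans (congrArg Subtype.val hσw),
    congrArg Subtype.val hwk⟩

/-- If `T` is an abelian subgroup of `G` normalized by `s`
(`s T s⁻¹ = T`), `s ^ m ∈ T`, `gcd(m, k) = 1`, and the `k`-th power map is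
surjective on `T`, then every element of `Z_T(s)` has a `k`-th root in
`Z_T(s)`. -/
theorem stmt1 {G : Type*} [Group G] (T : Subgroup G) (s : G) (m k : ℕ)
    (hm : 0 < m) (hk : 0 < k) (hcop : Nat.Coprime m k)
    (habelian : ∀ a ∈ T, ∀ b ∈ T, a * b = b * a)
    (hnorm : ∀ t : G, t ∈ T ↔ s * t * s⁻¹ ∈ T)
    (hsm : s ^ m ∈ T)
    (hsurj : ∀ x ∈ T, ∃ y ∈ T, y ^ k = x) :
    ∀ x ∈ T, s * x = x * s → ∃ y ∈ T, s * y = y * s ∧ y ^ k = x :=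
  stmt1_general T s m k hcop habelian hnorm hsm hsurj
end

section
/- Let F be a non-Archimedean local field (a nontrivially valued complete field with respect to a discrete valuation, e.g. ℚ_p), V a finite-dimensional F-vector space, and g ∈ GL(V). Suppose g fixes (setwise) a compact open subgroup K of V (under the natural topology) in the sense g(K) = K. Then g is distal: 0 is not a limit point of the orbit {gⁿ(x) : n ∈ ℕ} for any nonzero x ∈ V. -/
/-- Let `F` be a non-Archimedean local field (complete,
nontrivially valued, ultrametric, locally compact), `V` a finite-dimensional
`F`-vector space and `g : V ≃ₗ[F] V`.  If `g` fixes setwise a compact open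
additive subgroup `K` of `V`, then `g` is distal: for every `x ≠ 0`, `0` is not
a cluster point of the orbit `(gⁿ x)ₙ`. -/
theorem stmt2 {F : Type*} [NontriviallyNormedField F] [CompleteSpace F]
    [IsUltrametricDist F] [LocallyCompactSpace F]
    {V : Type*} [NormedAddCommGroup V] [NormedSpace F V] [FiniteDimensional F V]
    (g : V ≃ₗ[F] V) (K : AddSubgroup V)
    (hKcompact : IsCompact (K : Set V)) (hKopen : IsOpen (K : Set V))
    (hgK : g '' (K : Set V) = (K : Set V)) :
    ∀ x : V, x ≠ 0 →
      ¬ MapClusterPt (0 : V) Filter.atTop (fun n : ℕ => (g ^ n) x) := by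
  intro x hx hcl
  -- g preserves membership in K
  have hK1 : ∀ w : V, g w ∈ K ↔ w ∈ K := by
    intro w
    constructor
    · intro hw
      have : g w ∈ g '' (K : Set V) := by rw [hgK]; exact hw
      obtain ⟨u, hu, huw⟩ := this
      rwa [← g.injective huw]
    · intro hw
      have : g w ∈ g '' (K : Set V) := ⟨w, hw, rfl⟩
      rwa [hgK] at this
  have hKn : ∀ n : ℕ, ∀ w : V, (g ^ n) w ∈ K ↔ w ∈ K := by
    intro n
    induction n with
    | zero => intro w; simp
    | succ n ih =>
      intro w
      have : (g ^ (n + 1)) w = g ((g ^ n) w) := by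
        rw [pow_succ']
        rfl
      rw [this, hK1, ih]
  -- K is bounded, so there is a with a • x ∉ K
  obtain ⟨r, hr⟩ := hKcompact.isBounded.exists_norm_le
  obtain ⟨a, ha⟩ := NormedField.exists_lt_norm F (r / ‖x‖)
  have hxpos : 0 < ‖x‖ := norm_pos_iff.mpr hx
  have hz : a • x ∉ (K : Set V) := by
    intro hmem
    have h1 : ‖a • x‖ ≤ r := hr _ hmem
    have h2 : r < ‖a • x‖ := by
      rw [norm_smul]
      calc r = (r / ‖x‖) * ‖x‖ := by field_simp
        _ < ‖a‖ * ‖x‖ := by exact mul_lt_mul_of_pos_right ha hxpos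
    linarith
  -- orbit of a • x avoids K
  have horb : ∀ n : ℕ, a • (g ^ n) x ∉ (K : Set V) := by
    intro n hmem
    have : (g ^ n) (a • x) ∈ K := by
      rw [map_smul]; exact hmem
    exact hz ((hKn n _).mp this)
  -- but cluster point 0 forces the orbit into K frequently
  have hs : {v : V | a • v ∈ (K : Set V)} ∈ nhds (0 : V) := by
    have hopen : IsOpen {v : V | a • v ∈ (K : Set V)} :=
      hKopen.preimage (continuous_const_smul a)
    refine hopen.mem_nhds ?_
    simp only [Set.mem_setOf_eq, smul_zero]
    exact K.zero_mem
  have hfreq := mapClusterPt_iff_frequently.mp hcl _ hs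
  obtain ⟨n, hn⟩ := hfreq.exists
  exact horb n hn
end

section
/- Let F be a non-Archimedean local field (complete discretely valued field with finite residue field) and m a positive integer. Then there exists an integer r such that the order of every torsion element of GL(m, F) divides r. Equivalently, the torsion elements of GL(m, F) have uniformly bounded order. -/
open IsUltrametricDist Finset

namespace Stmt10

variable {F : Type*} [NontriviallyNormedField F] [IsUltrametricDist F]
variable {m : ℕ} [NeZero m]

local notation "Mat" => Matrix (Fin m) (Fin m) F

lemma entry_mul_le {A B : Mat} {a b : ℝ} (ha : ∀ i j, ‖A i j‖ ≤ a)
    (hb : ∀ i j, ‖B i j‖ ≤ b) (i j : Fin m) : ‖(A * B) i j‖ ≤ a * b := by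
  have h0a : 0 ≤ a := le_trans (norm_nonneg _) (ha i i)
  have : ‖(A * B) i j‖ ≤ a * b := by
    rw [Matrix.mul_apply]
    obtain ⟨k, -, hk⟩ := exists_norm_finset_sum_le_of_nonempty (t := Finset.univ)
      Finset.univ_nonempty (fun k => A i k * B k j)
    refine hk.trans ?_
    rw [norm_mul]
    exact mul_le_mul (ha i k) (hb k j) (norm_nonneg _) h0a
  exact this

lemma entry_mul_lt {A B : Mat} {b : ℝ} (ha : ∀ i j, ‖A i j‖ ≤ 1)
    (hb : ∀ i j, ‖B i j‖ < b) (i j : Fin m) : ‖(A * B) i j‖ < b := by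
  rw [Matrix.mul_apply]
  obtain ⟨k, -, hk⟩ := exists_norm_finset_sum_le_of_nonempty (t := Finset.univ)
    Finset.univ_nonempty (fun k => A i k * B k j)
  refine hk.trans_lt ?_
  rw [norm_mul]
  calc ‖A i k‖ * ‖B k j‖ ≤ 1 * ‖B k j‖ :=
        mul_le_mul_of_nonneg_right (ha i k) (norm_nonneg _)
    _ = ‖B k j‖ := one_mul _
    _ < b := hb k j

lemma entry_one_le (i j : Fin m) : ‖(1 : Mat) i j‖ ≤ 1 := by
  rw [Matrix.one_apply]
  split <;> simp

lemma entry_pow_le {A : Mat} (ha : ∀ i j, ‖A i j‖ ≤ 1) (k : ℕ) (i j : Fin m) :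
    ‖(A ^ k) i j‖ ≤ 1 := by
  induction k generalizing i j with
  | zero => simpa using entry_one_le i j
  | succ k ih => rw [pow_succ]; exact (entry_mul_le ih ha i j).trans (by norm_num)

lemma entry_le_one_of_sub_one {A : Mat} {ε : ℝ} (hε : ε ≤ 1)
    (h : ∀ i j, ‖(A - 1) i j‖ < ε) (i j : Fin m) : ‖A i j‖ ≤ 1 := by
  have : A i j = (A - 1) i j + (1 : Mat) i j := by simp
  rw [this]
  exact (norm_add_le_max _ _).trans (max_le ((h i j).le.trans hε) (entry_one_le i j))

/-- powers of something close to 1 stay close to 1 -/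
lemma entry_pow_sub_one_lt {A : Mat} {ε : ℝ} (hε : ε ≤ 1)
    (h : ∀ i j, ‖(A - 1) i j‖ < ε) (k : ℕ) (hk : 0 < ε) (i j : Fin m) :
    ‖(A ^ k - 1) i j‖ < ε := by
  have hA1 := entry_le_one_of_sub_one hε h
  have hgeom : ∀ i j, ‖(∑ i ∈ range k, A ^ i) i j‖ ≤ 1 := by
    intro i j
    rw [Matrix.sum_apply]
    exact norm_sum_le_of_forall_le_of_nonneg (by norm_num)
      (fun l _ => entry_pow_le hA1 l i j)
  have : A ^ k - 1 = (∑ i ∈ range k, A ^ i) * (A - 1) := (geom_sum_mul A k).symm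
  rw [this]
  exact entry_mul_lt hgeom h i j

/-- The key local rigidity: if `z ^ ℓ = 1` and `z - 1` has all entries of norm
less than `‖(ℓ : F)‖`, then `z = 1`. -/
lemma eq_one_of_pow_eq_one_of_small {z : Mat} {ℓ : ℕ} (hz : z ^ ℓ = 1)
    (h : ∀ i j, ‖(z - 1) i j‖ < ‖(ℓ : F)‖) : z = 1 := by
  have hl1 : ‖(ℓ : F)‖ ≤ 1 := norm_natCast_le_one F ℓ
  set a : Mat := z - 1 with ha
  -- max entry of a
  obtain ⟨⟨i0, j0⟩, hmax⟩ := Finite.exists_max (fun p : Fin m × Fin m => ‖a p.1 p.2‖)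
  set t : ℝ := ‖a i0 j0‖ with ht
  have htl : t < ‖(ℓ : F)‖ := h i0 j0
  rcases eq_or_lt_of_le (norm_nonneg (a i0 j0)) with h0 | h0
  · -- all entries zero
    have : a = 0 := by
      ext i j
      have := hmax (i, j)
      simp only at this
      have h2 : ‖a i j‖ ≤ 0 := le_trans this (le_of_eq (ht.trans h0.symm))
      simpa [norm_le_zero_iff] using h2
    have : z = 1 := by rwa [ha, sub_eq_zero] at this
    exact this
  · exfalso
    have hz1 : ∀ i j, ‖z i j‖ ≤ 1 :=
      entry_le_one_of_sub_one hl1 h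
    -- entries of (z^i - 1) are ≤ t
    have hpow : ∀ (k : ℕ) i j, ‖(z ^ k - 1) i j‖ ≤ t := by
      intro k i j
      have : z ^ k - 1 = (∑ i ∈ range k, z ^ i) * a := (geom_sum_mul z k).symm
      rw [this, Matrix.mul_apply]
      refine norm_sum_le_of_forall_le_of_nonneg h0.le (fun l _ => ?_)
      rw [norm_mul]
      calc ‖(∑ i ∈ range k, z ^ i) i l‖ * ‖a l j‖ ≤ 1 * ‖a l j‖ := by
            refine mul_le_mul_of_nonneg_right ?_ (norm_nonneg _)
            rw [Matrix.sum_apply]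
            exact norm_sum_le_of_forall_le_of_nonneg (by norm_num)
              (fun u _ => entry_pow_le hz1 u i l)
        _ = ‖a l j‖ := one_mul _
        _ ≤ t := hmax (l, j)
    -- geometric sum g = ℓ • 1 + h
    set d : Mat := ∑ i ∈ range ℓ, (z ^ i - 1) with hd
    have hga : (∑ i ∈ range ℓ, z ^ i) * a = 0 := by
      rw [ha, geom_sum_mul, hz, sub_self]
    have hsplit : (∑ i ∈ range ℓ, z ^ i) = d + (ℓ : F) • (1 : Mat) := by
      rw [hd, Finset.sum_sub_distrib]
      simp [sub_add_cancel, Nat.cast_smul_eq_nsmul F]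
    have hkey : (ℓ : F) • a = -(d * a) := by
      have : d * a + ((ℓ : F) • (1 : Mat)) * a = 0 := by
        rw [← add_mul, ← hsplit, hga]
      have h2 : ((ℓ : F) • (1 : Mat)) * a = (ℓ : F) • a := by
        rw [Matrix.smul_mul, one_mul]
      rw [h2] at this
      exact eq_neg_of_add_eq_zero_right this
    have hd_le : ∀ i j, ‖d i j‖ ≤ t := by
      intro i j
      rw [hd, Matrix.sum_apply]
      exact norm_sum_le_of_forall_le_of_nonneg h0.le (fun l _ => hpow l i j)
    have hle : ‖(ℓ : F)‖ * t ≤ t * t := by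
      have h1 : ‖((ℓ : F) • a) i0 j0‖ = ‖(ℓ : F)‖ * t := by
        rw [Matrix.smul_apply, norm_smul, ht]
      have h2 : ‖((ℓ : F) • a) i0 j0‖ ≤ t * t := by
        rw [hkey, Matrix.neg_apply, norm_neg]
        exact entry_mul_le hd_le (fun i j => hmax (i, j)) i0 j0
      rw [← h1]; exact h2
    have : ‖(ℓ : F)‖ ≤ t := le_of_mul_le_mul_right (by linarith [hle]) (h0.trans_le (le_of_eq ht.symm) |>.trans_le le_rfl)
    exact absurd htl (not_lt.mpr this)

lemma norm_eq_one_of_pow_eq_one {x : F} {k : ℕ} (hx : x ^ k = 1) (hk : k ≠ 0) :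
    ‖x‖ = 1 := by
  have h : ‖x‖ ^ k = 1 := by rw [← norm_pow, hx, norm_one]
  rcases lt_trichotomy ‖x‖ 1 with h1 | h1 | h1
  · exact absurd h (by simpa using (pow_lt_one₀ (norm_nonneg x) h1 hk).ne)
  · exact h1
  · exact absurd h (by simpa using (one_lt_pow₀ h1 hk).ne')

lemma norm_prime_eq_one_of_ne {q ℓ : ℕ} (hq : q.Prime) (hl : ℓ.Prime) (hne : ℓ ≠ q)
    (h : ‖(q : F)‖ < 1) : ‖(ℓ : F)‖ = 1 := by
  refine le_antisymm (norm_natCast_le_one F ℓ) ?_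
  by_contra hlt
  push_neg at hlt
  have hcop : Nat.Coprime ℓ q := (Nat.coprime_primes hl hq).mpr hne
  have hb := Nat.gcd_eq_gcd_ab ℓ q
  rw [hcop.gcd_eq_one] at hb
  have hF : (1 : F) = (ℓ : F) * ((Nat.gcdA ℓ q : ℤ) : F) + (q : F) * ((Nat.gcdB ℓ q : ℤ) : F) := by
    exact_mod_cast congrArg (fun z : ℤ => (z : F)) hb
  have h1 : ‖(ℓ : F) * ((Nat.gcdA ℓ q : ℤ) : F)‖ < 1 := by
    rw [norm_mul]
    calc ‖(ℓ : F)‖ * ‖((Nat.gcdA ℓ q : ℤ) : F)‖ ≤ ‖(ℓ : F)‖ * 1 :=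
        mul_le_mul_of_nonneg_left (norm_intCast_le_one F _) (norm_nonneg _)
      _ < 1 := by rw [mul_one]; exact hlt
  have h2 : ‖(q : F) * ((Nat.gcdB ℓ q : ℤ) : F)‖ < 1 := by
    rw [norm_mul]
    calc ‖(q : F)‖ * ‖((Nat.gcdB ℓ q : ℤ) : F)‖ ≤ ‖(q : F)‖ * 1 :=
        mul_le_mul_of_nonneg_left (norm_intCast_le_one F _) (norm_nonneg _)
      _ < 1 := by rw [mul_one]; exact h
  have := (norm_add_le_max _ _).trans_lt (max_lt h1 h2)
  rw [← hF, norm_one] at this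
  exact lt_irrefl _ this

lemma no_prime_divisor {z : Mat} (hfin : IsOfFinOrder z) {ε : ℝ} (hε0 : 0 < ε)
    (hε1 : ε ≤ 1) (hsmall : ∀ i j, ‖(z - 1) i j‖ < ε) {ℓ : ℕ} (hl : ℓ.Prime)
    (hdvd : ℓ ∣ orderOf z) (hεl : ε ≤ ‖(ℓ : F)‖) : False := by
  have hn : 0 < orderOf z := hfin.orderOf_pos
  have hw : (z ^ (orderOf z / ℓ)) ^ ℓ = 1 := by
    rw [← pow_mul, Nat.div_mul_cancel hdvd]; exact pow_orderOf_eq_one z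
  have hwsmall : ∀ i j, ‖(z ^ (orderOf z / ℓ) - 1) i j‖ < ‖(ℓ : F)‖ :=
    fun i j => lt_of_lt_of_le (entry_pow_sub_one_lt hε1 hsmall _ hε0 i j) hεl
  have hw1 : z ^ (orderOf z / ℓ) = 1 := eq_one_of_pow_eq_one_of_small hw hwsmall
  have hdv : orderOf z ∣ orderOf z / ℓ := orderOf_dvd_of_pow_eq_one hw1
  have hlt : orderOf z / ℓ < orderOf z := Nat.div_lt_self hn hl.one_lt
  have hpos : 0 < orderOf z / ℓ := Nat.div_pos (Nat.le_of_dvd hn hdvd) hl.pos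
  exact absurd (Nat.le_of_dvd hpos hdv) (not_le.mpr hlt)

lemma local_bound :
    ∃ ε : ℝ, 0 < ε ∧ ε ≤ 1 ∧ ∃ P : ℕ, 0 < P ∧
      ∀ z : Mat, IsOfFinOrder z → (∀ i j, ‖(z - 1) i j‖ < ε) → z ^ P = 1 := by
  rcases CharP.char_is_prime_or_zero F (ringChar F) with hp | hp
  · -- positive characteristic p
    set p := ringChar F with hpdef
    haveI : Fact p.Prime := ⟨hp⟩
    haveI : CharP F p := ringChar.charP F
    refine ⟨1, one_pos, le_rfl, p ^ m, pow_pos hp.pos m, ?_⟩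
    intro z hz hsmall
    have hall : ∀ {ℓ : ℕ}, ℓ.Prime → ℓ ∣ orderOf z → ℓ = p := by
      intro ℓ hl hdvd
      by_contra hne
      have hzl : (ZMod.castHom dvd_rfl F) (ℓ : ZMod p) = (ℓ : F) := map_natCast (ZMod.castHom dvd_rfl F) ℓ
      have hl0 : (ℓ : ZMod p) ≠ 0 := by
        rw [Ne, ZMod.natCast_eq_zero_iff]
        intro hdp
        exact hne ((Nat.prime_dvd_prime_iff_eq hp hl).mp hdp).symm
      have hferm : ((ℓ : ZMod p)) ^ (p - 1) = 1 := ZMod.pow_card_sub_one_eq_one hl0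
      have hfermF : ((ℓ : F)) ^ (p - 1) = 1 := by
        rw [← hzl, ← map_pow, hferm, map_one]
      have hnorm : ‖(ℓ : F)‖ = 1 :=
        norm_eq_one_of_pow_eq_one hfermF (Nat.sub_ne_zero_of_lt hp.one_lt)
      exact no_prime_divisor hz one_pos le_rfl hsmall hl hdvd hnorm.ge
    have hA : orderOf z = p ^ (orderOf z).primeFactorsList.length :=
      Nat.eq_prime_pow_of_unique_prime_dvd hz.orderOf_pos.ne' hall
    -- nilpotency of z - 1
    haveI : CharP Mat p := Matrix.charP p
    have hcom : Commute (z - 1 : Mat) 1 := Commute.one_right _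
    have hzpA : z ^ p ^ (orderOf z).primeFactorsList.length = 1 := by
      rw [← hA]; exact pow_orderOf_eq_one z
    have hnilA : (z - 1 : Mat) ^ p ^ (orderOf z).primeFactorsList.length = 0 := by
      have := add_pow_char_pow_of_commute (R := Mat) p (orderOf z).primeFactorsList.length hcom
      rw [sub_add_cancel, one_pow, hzpA] at this
      have h2 := congrArg (fun w : Mat => w - 1) this
      simpa using h2.symm
    have hnil : IsNilpotent (z - 1 : Mat) := ⟨_, hnilA⟩
    have hcp : Matrix.charpoly (z - 1 : Mat) = Polynomial.X ^ Fintype.card (Fin m) := by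
      have h1 := Matrix.isNilpotent_charpoly_sub_pow_of_isNilpotent hnil
      have h2 := h1.eq_zero
      rwa [sub_eq_zero] at h2
    have hm0 : (z - 1 : Mat) ^ m = 0 := by
      have := Matrix.aeval_self_charpoly (z - 1 : Mat)
      rw [hcp] at this
      simpa [Fintype.card_fin] using this
    have hmpow : (z - 1 : Mat) ^ p ^ m = 0 := by
      have hle : m ≤ p ^ m := (Nat.lt_pow_self (n := m) hp.one_lt).le
      rw [← Nat.sub_add_cancel hle, pow_add, hm0, mul_zero]
    have := add_pow_char_pow_of_commute (R := Mat) p m hcom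
    rw [sub_add_cancel, one_pow, hmpow, zero_add] at this
    exact this
  · -- characteristic zero
    haveI : CharP F 0 := by rw [← hp]; exact ringChar.charP F
    haveI : CharZero F := CharP.charP_to_charZero F
    have horder : ∀ (ε : ℝ), 0 < ε → ε ≤ 1 → (∀ ℓ : ℕ, ℓ.Prime → ε ≤ ‖(ℓ : F)‖) →
        ∀ z : Mat, IsOfFinOrder z → (∀ i j, ‖(z - 1) i j‖ < ε) → z ^ 1 = 1 := by
      intro ε hε0 hε1 hεl z hz hsmall
      rw [pow_one]
      have h1 : orderOf z = 1 := by
        by_contra hne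
        obtain ⟨ℓ, hl, hdvd⟩ := Nat.exists_prime_and_dvd hne
        exact no_prime_divisor hz hε0 hε1 hsmall hl hdvd (hεl ℓ hl)
      rw [← pow_one z, ← h1]
      exact pow_orderOf_eq_one z
    by_cases hq : ∃ q : ℕ, q.Prime ∧ ‖(q : F)‖ < 1
    · obtain ⟨q, hqp, hq1⟩ := hq
      have hqpos : (0 : ℝ) < ‖(q : F)‖ := by
        rw [norm_pos_iff]
        exact_mod_cast hqp.pos.ne'
      refine ⟨‖(q : F)‖, hqpos, hq1.le, 1, one_pos, ?_⟩
      refine horder _ hqpos hq1.le ?_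
      intro ℓ hl
      by_cases hlq : ℓ = q
      · subst hlq; exact le_rfl
      · exact le_of_le_of_eq (hq1.le.trans le_rfl) (norm_prime_eq_one_of_ne hqp hl hlq hq1).symm
    · push_neg at hq
      refine ⟨1, one_pos, le_rfl, 1, one_pos, ?_⟩
      refine horder _ one_pos le_rfl ?_
      intro ℓ hl
      exact hq ℓ hl

section Global
variable [LocallyCompactSpace F]

lemma global_bound :
    ∃ r : ℕ, 0 < r ∧ ∀ Y : GL (Fin m) F, IsOfFinOrder Y →
      (∀ i j, ‖(Y : Mat) i j‖ ≤ 1) →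
      (∀ i j, ‖((Y⁻¹ : GL (Fin m) F) : Mat) i j‖ ≤ 1) →
      orderOf Y ∣ r := by
  haveI : ProperSpace F :=
    ProperSpace.of_nontriviallyNormedField_of_weaklyLocallyCompactSpace F
  obtain ⟨ε, hε0, hε1, P, hP, hloc⟩ := local_bound (F := F) (m := m)
  set K : Set (Fin m → Fin m → F) :=
    Set.univ.pi (fun _ => Set.univ.pi fun _ => Metric.closedBall (0 : F) 1) with hK
  have hKc : IsCompact K :=
    isCompact_univ_pi fun _ => isCompact_univ_pi fun _ => isCompact_closedBall _ _
  have hcover : K ⊆ ⋃ c : Fin m → Fin m → F, Metric.ball c ε :=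
    fun f _ => Set.mem_iUnion.mpr ⟨f, Metric.mem_ball_self hε0⟩
  obtain ⟨t, ht⟩ := hKc.elim_finite_subcover (fun c => Metric.ball c ε)
    (fun _ => Metric.isOpen_ball) hcover
  refine ⟨t.card.factorial * P, Nat.mul_pos (Nat.factorial_pos _) hP, ?_⟩
  intro Y hY hY1 hY2
  set Z := Subgroup.zpowers Y with hZ
  have hpowint : ∀ k : ℕ, ∀ i j, ‖((Y ^ k : GL (Fin m) F) : Mat) i j‖ ≤ 1 := by
    intro k
    induction k with
    | zero => intro i j; simpa using entry_one_le (F := F) i j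
    | succ k ih =>
      intro i j
      have hcoe : ((Y ^ (k + 1) : GL (Fin m) F) : Mat)
          = ((Y ^ k : GL (Fin m) F) : Mat) * (Y : Mat) := by
        rw [pow_succ, Units.val_mul]
      rw [hcoe]
      simpa using entry_mul_le ih hY1 i j
  have hpowinv : ∀ k : ℕ, ∀ i j, ‖(((Y⁻¹) ^ k : GL (Fin m) F) : Mat) i j‖ ≤ 1 := by
    intro k
    induction k with
    | zero => intro i j; simpa using entry_one_le (F := F) i j
    | succ k ih =>
      intro i j
      have hcoe : (((Y⁻¹) ^ (k + 1) : GL (Fin m) F) : Mat)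
          = (((Y⁻¹) ^ k : GL (Fin m) F) : Mat) * ((Y⁻¹ : GL (Fin m) F) : Mat) := by
        rw [pow_succ, Units.val_mul]
      rw [hcoe]
      simpa using entry_mul_le ih hY2 i j
  have hint : ∀ g : GL (Fin m) F, g ∈ Z → ∀ i j, ‖(g : Mat) i j‖ ≤ 1 := by
    intro g hg
    obtain ⟨k, rfl⟩ := Subgroup.mem_zpowers_iff.mp hg
    rcases le_or_gt 0 k with hk | hk
    · lift k to ℕ using hk
      rw [zpow_natCast]
      exact hpowint k
    · have : Y ^ k = (Y⁻¹) ^ (-k).toNat := by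
        rw [← zpow_natCast, Int.toNat_of_nonneg (by omega), inv_zpow, ← zpow_neg]
        ring_nf
      rw [this]
      exact hpowinv _
  haveI : Finite ↥Z := (finite_zpowers.mpr hY).to_subtype
  -- the small subgroup
  set H : Subgroup (GL (Fin m) F) :=
    { carrier := {g | g ∈ Z ∧ ∀ i j, ‖((g : Mat) - 1) i j‖ < ε}
      one_mem' := ⟨Z.one_mem, by intro i j; simpa using hε0⟩
      mul_mem' := by
        rintro a b ⟨haZ, ha⟩ ⟨hbZ, hb⟩
        refine ⟨Z.mul_mem haZ hbZ, fun i j => ?_⟩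
        have hab : ((a * b : GL (Fin m) F) : Mat) - 1
            = (a : Mat) * ((b : Mat) - 1) + ((a : Mat) - 1) := by
          rw [Units.val_mul]; noncomm_ring
        rw [hab]
        exact (norm_add_le_max _ _).trans_lt
          (max_lt (entry_mul_lt (hint a haZ) hb i j) (ha i j))
      inv_mem' := by
        rintro a ⟨haZ, ha⟩
        refine ⟨Z.inv_mem haZ, fun i j => ?_⟩
        have hab : ((a⁻¹ : GL (Fin m) F) : Mat) - 1
            = -(((a⁻¹ : GL (Fin m) F) : Mat) * ((a : Mat) - 1)) := by
          have h1 : ((a⁻¹ : GL (Fin m) F) : Mat) * (a : Mat) = 1 := a.inv_mul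
          rw [mul_sub, h1, mul_one, neg_sub]
        rw [hab, Matrix.neg_apply, norm_neg]
        exact entry_mul_lt (hint _ (Z.inv_mem haZ)) ha i j } with hHdef
  set Hs : Subgroup ↥Z := H.subgroupOf Z with hHs
  set Q := ↥Z ⧸ Hs with hQ
  -- net point assignment
  have hmemK : ∀ g : ↥Z, (fun i j => ((g : GL (Fin m) F) : Mat) i j) ∈ K := by
    intro g
    rw [hK]
    intro i _
    intro j _
    rw [Metric.mem_closedBall, dist_zero_right]
    exact hint _ g.2 i j
  have hcov2 : ∀ g : ↥Z, ∃ c ∈ t,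
      (fun i j => ((g : GL (Fin m) F) : Mat) i j) ∈ Metric.ball c ε := by
    intro g
    have := ht (hmemK g)
    simpa using this
  choose c hc1 hc2 using hcov2
  have key : ∀ g h : ↥Z, c g = c h →
      (QuotientGroup.mk g : Q) = QuotientGroup.mk h := by
    intro g h hch
    rw [QuotientGroup.eq]
    have hgZ := g.2
    have hgiZ : ((g⁻¹ : ↥Z) : GL (Fin m) F) ∈ Z := (g⁻¹ : ↥Z).2
    refine Subgroup.mem_subgroupOf.mpr ⟨(g⁻¹ * h : ↥Z).2, fun i j => ?_⟩
    have hco : (((g⁻¹ * h : ↥Z) : GL (Fin m) F) : Mat) - 1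
        = (((g⁻¹ : ↥Z) : GL (Fin m) F) : Mat)
          * (((h : GL (Fin m) F) : Mat) - ((g : GL (Fin m) F) : Mat)) := by
      have h2 : (((g⁻¹ : ↥Z) : GL (Fin m) F) : Mat) * ((g : GL (Fin m) F) : Mat) = 1 := by
        have : ((g⁻¹ : ↥Z) : GL (Fin m) F) = ((g : GL (Fin m) F))⁻¹ := rfl
        rw [this]; exact (g : GL (Fin m) F).inv_mul
      rw [mul_sub, h2]
      have h3 : (((g⁻¹ * h : ↥Z) : GL (Fin m) F) : Mat)
          = (((g⁻¹ : ↥Z) : GL (Fin m) F) : Mat) * ((h : GL (Fin m) F) : Mat) := by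
        norm_cast
      rw [h3]
    rw [hco]
    refine entry_mul_lt (hint _ hgiZ) (fun i j => ?_) i j
    -- entrywise distance bound from shared net point
    have hg' := hc2 g
    have hh' := hc2 h
    rw [Metric.mem_ball] at hg' hh'
    have hgd := (dist_pi_lt_iff hε0).mp hg' i
    have hhd := (dist_pi_lt_iff hε0).mp hh' i
    have hgd2 := (dist_pi_lt_iff hε0).mp hgd j
    have hhd2 := (dist_pi_lt_iff hε0).mp hhd j
    rw [hch] at hgd2
    have htri := IsUltrametricDist.dist_triangle_max
      (((h : GL (Fin m) F) : Mat) i j) (c h i j) (((g : GL (Fin m) F) : Mat) i j)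
    have : dist (((h : GL (Fin m) F) : Mat) i j) (((g : GL (Fin m) F) : Mat) i j) < ε :=
      htri.trans_lt (max_lt hhd2 (by rw [dist_comm]; exact hgd2))
    simpa [Matrix.sub_apply, dist_eq_norm] using this
  -- injection from Q into the net
  haveI : Finite Q := Quotient.finite _
  have hcard : Nat.card Q ≤ t.card := by
    have hf : Function.Injective
        (fun q : Q => (⟨c (Quotient.out q), hc1 _⟩ : {x // x ∈ t})) := by
      intro q q' hqq
      have hcc : c (Quotient.out q) = c (Quotient.out q') := by
        simpa using congrArg Subtype.val hqq
      have h2 := key _ _ hcc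
      have e1 : (QuotientGroup.mk (Quotient.out q) : Q) = q := QuotientGroup.out_eq' q
      have e2 : (QuotientGroup.mk (Quotient.out q') : Q) = q' := QuotientGroup.out_eq' q'
      rw [e1, e2] at h2
      exact h2
    have := Nat.card_le_card_of_injective _ hf
    rwa [Nat.card_eq_finsetCard] at this
  -- Y ^ (card Q) lands in the small subgroup H
  set j : ℕ := Nat.card Q with hj
  have hjpos : 0 < j := Nat.card_pos
  set ξ : ↥Z := (⟨Y, Subgroup.mem_zpowers Y⟩ : ↥Z) with hξdef
  have hξ : ξ ^ j ∈ Hs := by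
    rw [← QuotientGroup.eq_one_iff]
    have h1 : (QuotientGroup.mk (ξ ^ j) : Q) = (QuotientGroup.mk' Hs) (ξ ^ j) := rfl
    rw [h1, map_pow]
    exact pow_card_eq_one'
  have hYj : (Y ^ j : GL (Fin m) F) ∈ H := by
    have h1 := Subgroup.mem_subgroupOf.mp hξ
    have h2 : ((ξ ^ j : ↥Z) : GL (Fin m) F) = Y ^ j := by
      rw [SubmonoidClass.coe_pow]
    rwa [h2] at h1
  obtain ⟨-, hsmall⟩ := hYj
  have hzfin : IsOfFinOrder ((Y ^ j : GL (Fin m) F) : Mat) :=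
    (Units.coeHom Mat).isOfFinOrder hY.pow
  have hzP := hloc _ hzfin hsmall
  have hYjP : (Y ^ j) ^ P = 1 := by
    apply Units.ext
    rw [Units.val_pow_eq_pow_val, Units.val_one]
    exact hzP
  have hdvd : orderOf Y ∣ j * P := orderOf_dvd_of_pow_eq_one (by rw [pow_mul]; exact hYjP)
  exact hdvd.trans (mul_dvd_mul (Nat.dvd_factorial hjpos hcard) dvd_rfl)

end Global

section Conj

variable (F) in
/-- The closed unit ball of an ultrametric field, as a subring. -/
def Oball : Subring F where
  carrier := {a : F | ‖a‖ ≤ 1}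
  one_mem' := by simp
  mul_mem' := by
    intro a b ha hb
    simp only [Set.mem_setOf_eq] at *
    rw [norm_mul]
    calc ‖a‖ * ‖b‖ ≤ 1 * 1 := mul_le_mul ha hb (norm_nonneg b) zero_le_one
      _ = 1 := one_mul 1
  zero_mem' := by simp
  add_mem' := by
    intro a b ha hb
    exact (norm_add_le_max a b).trans (max_le ha hb)
  neg_mem' := by intro a ha; simpa using ha

lemma mem_Oball {a : F} : a ∈ Oball F ↔ ‖a‖ ≤ 1 := Iff.rfl

lemma Oball_isPIR [LocallyCompactSpace F] : IsPrincipalIdealRing ↥(Oball F) := by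
  haveI : ProperSpace F :=
    ProperSpace.of_nontriviallyNormedField_of_weaklyLocallyCompactSpace F
  constructor
  intro I
  by_cases hI : I = ⊥
  · exact ⟨⟨0, by rw [hI, Submodule.span_zero_singleton]⟩⟩
  · set S : Set F := Subtype.val '' (I : Set ↥(Oball F)) with hSdef
    have hSsub : S ⊆ Metric.closedBall 0 1 := by
      rintro _ ⟨a, _, rfl⟩
      rw [Metric.mem_closedBall, dist_zero_right]
      exact a.2
    have hScl : closure S ⊆ Metric.closedBall 0 1 :=
      closure_minimal hSsub Metric.isClosed_closedBall
    have hcomp : IsCompact (closure S) :=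
      (isCompact_closedBall (0 : F) 1).of_isClosed_subset isClosed_closure hScl
    have hne : (0 : F) ∈ S := ⟨0, I.zero_mem, rfl⟩
    obtain ⟨c, hcC, hcmax⟩ := hcomp.exists_isMaxOn ⟨0, subset_closure hne⟩
      continuous_norm.continuousOn
    have hc0 : c ≠ 0 := by
      intro h0
      apply hI
      rw [eq_bot_iff]
      intro a haI
      have h1 : ‖(a : F)‖ ≤ ‖c‖ := hcmax (subset_closure ⟨a, haI, rfl⟩)
      rw [h0, norm_zero] at h1
      have h2 : (a : F) = 0 := norm_le_zero_iff.mp h1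
      rw [Submodule.mem_bot]
      exact Subtype.ext h2
    have hcpos : (0 : ℝ) < ‖c‖ := norm_pos_iff.mpr hc0
    obtain ⟨b, hbS, hbc⟩ := Metric.mem_closure_iff.mp hcC ‖c‖ hcpos
    have hbnorm : ‖b‖ = ‖c‖ := by
      have hcb : ‖c - b‖ < ‖c‖ := by rwa [← dist_eq_norm]
      have h1 : ‖b‖ ≤ ‖c‖ := by
        have h1a := norm_add_le_max c (b - c)
        rw [show c + (b - c) = b by ring] at h1a
        refine h1a.trans (max_le le_rfl ?_)
        rw [← neg_sub, norm_neg]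
        exact hcb.le
      rcases eq_or_lt_of_le h1 with h | h
      · exact h
      · exfalso
        have h2 := norm_add_le_max b (c - b)
        rw [show b + (c - b) = c by ring] at h2
        exact absurd h2 (not_le.mpr (max_lt h hcb))
    obtain ⟨β, hβI, hβb⟩ := hbS
    have hbne : (β : F) ≠ 0 := by
      rw [hβb]
      intro h0
      rw [h0, norm_zero] at hbnorm
      exact hc0 (norm_eq_zero.mp hbnorm.symm)
    refine ⟨⟨β, le_antisymm ?_ ?_⟩⟩
    · intro a haI
      rw [Submodule.mem_span_singleton]
      have hanorm : ‖(a : F)‖ ≤ ‖(β : F)‖ := by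
        rw [hβb, hbnorm]
        exact hcmax (subset_closure ⟨a, haI, rfl⟩)
      have hq1 : ‖(a : F) / (β : F)‖ ≤ 1 := by
        rw [norm_div]
        rw [div_le_one (by rwa [norm_pos_iff])]
        exact hanorm
      refine ⟨⟨(a : F) / (β : F), hq1⟩, ?_⟩
      apply Subtype.ext
      show ((a : F) / (β : F)) * (β : F) = (a : F)
      exact div_mul_cancel₀ _ hbne
    · rw [Submodule.span_le, Set.singleton_subset_iff]
      exact hβI

lemma Oball_isFractionRing : IsFractionRing ↥(Oball F) F := by
  constructor
  constructor
  case map_units =>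
    rintro ⟨y, hynzd⟩
    have hy0 : (y : F) ≠ 0 := by
      intro h
      have : y = 0 := Subtype.ext h
      exact (nonZeroDivisors.ne_zero hynzd) this
    exact isUnit_iff_ne_zero.mpr hy0
  case surj =>
    intro z
    obtain ⟨ξ, hξ0, hξ1⟩ := NormedField.exists_norm_lt_one F
    obtain ⟨k, hk⟩ := exists_pow_lt_of_lt_one
      (show (0 : ℝ) < 1 / (‖z‖ + 1) by positivity) hξ1
    have hξk : ‖ξ ^ k‖ ≤ 1 := by
      rw [norm_pow]
      exact pow_le_one₀ (norm_nonneg ξ) hξ1.le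
    have hξkz : ‖ξ ^ k * z‖ ≤ 1 := by
      rw [norm_mul, norm_pow]
      have h0 : (0 : ℝ) ≤ ‖z‖ := norm_nonneg z
      have h1 : ‖ξ‖ ^ k * ‖z‖ ≤ (1 / (‖z‖ + 1)) * ‖z‖ :=
        mul_le_mul_of_nonneg_right hk.le h0
      refine h1.trans ?_
      rw [div_mul_eq_mul_div, one_mul, div_le_one (by positivity)]
      linarith
    have hξkne : (⟨ξ ^ k, hξk⟩ : ↥(Oball F)) ≠ 0 := by
      rw [Ne, Subtype.ext_iff]
      exact pow_ne_zero k (norm_pos_iff.mp hξ0)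
    refine ⟨⟨⟨ξ ^ k * z, hξkz⟩, ⟨⟨ξ ^ k, hξk⟩, mem_nonZeroDivisors_of_ne_zero hξkne⟩⟩, ?_⟩
    show z * (ξ ^ k) = ξ ^ k * z
    exact mul_comm z _
  case exists_of_eq =>
    intro a b h
    exact ⟨1, by rw [Subtype.ext h]⟩

end Conj

section ConjMain

variable [LocallyCompactSpace F]

set_option maxHeartbeats 2000000 in
set_option synthInstance.maxHeartbeats 400000 in
lemma exists_conj_integral (x : GL (Fin m) F) (hx : IsOfFinOrder x) :
    ∃ Y : GL (Fin m) F, orderOf Y = orderOf x ∧ IsOfFinOrder Y ∧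
      (∀ i j, ‖(Y : Mat) i j‖ ≤ 1) ∧
      (∀ i j, ‖((Y⁻¹ : GL (Fin m) F) : Mat) i j‖ ≤ 1) := by
  classical
  haveI hPIR : IsPrincipalIdealRing ↥(Oball F) := Oball_isPIR
  haveI hFR : IsFractionRing ↥(Oball F) F := Oball_isFractionRing
  set n := orderOf x with hn
  have hnpos : 0 < n := hx.orderOf_pos
  set xM : Mat := (x : Mat) with hxM
  have hxMn : xM ^ n = 1 := by
    rw [hxM, ← Units.val_pow_eq_pow_val, hn, pow_orderOf_eq_one, Units.val_one]
  set e : Fin m → (Fin m → F) := ⇑(Pi.basisFun F (Fin m)) with he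
  set S : Set (Fin m → F) :=
    Set.range (fun p : Fin n × Fin m => (xM ^ (p.1 : ℕ)).mulVec (e p.2)) with hS
  set L : Submodule ↥(Oball F) (Fin m → F) := Submodule.span ↥(Oball F) S with hL
  have hSL : ∀ (k : ℕ) (j : Fin m), (xM ^ k).mulVec (e j) ∈ L := by
    intro k j
    have hmod : (xM ^ k) = xM ^ (k % n) := by
      conv_lhs => rw [← Nat.mod_add_div k n, pow_add, pow_mul, hxMn, one_pow, mul_one]
    rw [hmod]
    exact Submodule.subset_span ⟨(⟨k % n, Nat.mod_lt k hnpos⟩, j), rfl⟩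
  have hsmul : ∀ (r : ↥(Oball F)) (u : Fin m → F), r • u = (r : F) • u := by
    intro r u
    rw [← algebraMap_smul F r u]
    rfl
  have hstab : ∀ (w : Mat), (∀ k : ℕ, ∀ j, w.mulVec ((xM ^ k).mulVec (e j)) ∈ L) →
      ∀ u ∈ L, w.mulVec u ∈ L := by
    intro w hw u hu
    induction hu using Submodule.span_induction with
    | mem u hu =>
      obtain ⟨⟨k, j⟩, rfl⟩ := hu
      exact hw k j
    | zero => rw [Matrix.mulVec_zero]; exact L.zero_mem
    | add u v _ _ hu hv => rw [Matrix.mulVec_add]; exact L.add_mem hu hv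
    | smul r u _ hu =>
      rw [hsmul, Matrix.mulVec_smul, ← hsmul]
      exact L.smul_mem r hu
  have hxstab : ∀ u ∈ L, xM.mulVec u ∈ L := by
    refine hstab xM (fun k j => ?_)
    rw [Matrix.mulVec_mulVec, ← pow_succ']
    exact hSL _ j
  set xMinv : Mat := ((x⁻¹ : GL (Fin m) F) : Mat) with hxMinv
  have hxinv_pow : xMinv = xM ^ (n - 1) := by
    have h1 : x * x ^ (n - 1) = 1 := by
      rw [← pow_succ', Nat.sub_add_cancel hnpos, hn, pow_orderOf_eq_one]
    have h2 : x⁻¹ = x ^ (n - 1) := inv_eq_of_mul_eq_one_right h1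
    rw [hxMinv, h2, Units.val_pow_eq_pow_val, hxM]
  have hxinvstab : ∀ u ∈ L, xMinv.mulVec u ∈ L := by
    refine hstab xMinv (fun k j => ?_)
    rw [hxinv_pow, Matrix.mulVec_mulVec, ← pow_add]
    exact hSL _ j
  haveI hLfin : Module.Finite ↥(Oball F) ↥L :=
    Module.Finite.span_of_finite _ (Set.finite_range _)
  haveI hLtf : NoZeroSMulDivisors ↥(Oball F) ↥L := by
    constructor
    intro r w hrw
    by_cases hr : r = 0
    · exact Or.inl hr
    · refine Or.inr ?_
      have h1 : ((r • w : ↥L) : Fin m → F) = (r : F) • (w : Fin m → F) := by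
        rw [Submodule.coe_smul, hsmul]
      rw [hrw, Submodule.coe_zero] at h1
      have hr' : (r : F) ≠ 0 := fun h => hr (Subtype.ext h)
      have h2 : (w : Fin m → F) = 0 := by
        rcases smul_eq_zero.mp h1.symm with h | h
        · exact absurd h hr'
        · exact h
      exact Subtype.ext h2
  haveI hLfree : Module.Free ↥(Oball F) ↥L := Module.free_of_finite_type_torsion_free'
  set ι := Module.Free.ChooseBasisIndex ↥(Oball F) ↥L with hι
  set cb : Module.Basis ι ↥(Oball F) ↥L := Module.Free.chooseBasis _ _ with hcb
  set v : ι → (Fin m → F) := fun i => ↑(cb i) with hv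
  have hvindep : LinearIndependent F v := by
    rw [← LinearIndependent.iff_fractionRing (R := ↥(Oball F))]
    exact cb.linearIndependent.map' L.subtype (Submodule.ker_subtype L)
  have hLsub : (L : Set (Fin m → F)) ⊆ ↑(Submodule.span F (Set.range v)) := by
    have h1 : L = Submodule.map L.subtype (Submodule.span ↥(Oball F) (Set.range ⇑cb)) := by
      rw [cb.span_eq, Submodule.map_top, Submodule.range_subtype]
    have h2 : Submodule.map L.subtype (Submodule.span ↥(Oball F) (Set.range ⇑cb))
        = Submodule.span ↥(Oball F) (Set.range v) := by
      rw [Submodule.map_span]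
      congr 1
      rw [← Set.range_comp]
      rfl
    rw [h1, h2]
    exact Submodule.span_subset_span ↥(Oball F) F _
  have hvspan : Submodule.span F (Set.range v) = ⊤ := by
    rw [eq_top_iff, ← (Pi.basisFun F (Fin m)).span_eq, Submodule.span_le]
    rintro w ⟨j, rfl⟩
    apply hLsub
    have h0 : (Pi.basisFun F (Fin m)) j = (xM ^ 0).mulVec (e j) := by
      rw [pow_zero, Matrix.one_mulVec, he]
    rw [h0]
    exact hSL 0 j
  set b' : Module.Basis ι F (Fin m → F) := Module.Basis.mk hvindep (by rw [hvspan]) with hb'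
  haveI : Fintype ι := Module.Free.ChooseBasisIndex.fintype _ _
  have hcard : Fintype.card ι = m := by
    have h1 := Module.finrank_eq_card_basis b'
    rw [Module.finrank_pi F] at h1
    rw [← h1, Fintype.card_fin]
  set eqv : ι ≃ Fin m := Fintype.equivFinOfCardEq hcard with heqv
  set b : Module.Basis (Fin m) F (Fin m → F) := b'.reindex eqv with hb
  set cc : Module.Basis (Fin m) ↥(Oball F) ↥L := cb.reindex eqv with hcc
  have hbcc : ∀ k : Fin m, b k = ↑(cc k) := by
    intro k
    rw [hb, hcc, Module.Basis.reindex_apply, Module.Basis.reindex_apply, hb', Module.Basis.mk_apply]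
  have hbL : ∀ k : Fin m, b k ∈ L := by
    intro k
    rw [hbcc]
    exact (cc k).2
  have hrepr : ∀ (u : Fin m → F), u ∈ L → ∀ i, ‖b.repr u i‖ ≤ 1 := by
    intro u hu i
    set w : ↥L := ⟨u, hu⟩ with hw
    have h1 : u = ∑ k, ((cc.repr w k : F)) • b k := by
      have h2 := cc.sum_repr w
      have h3 := congrArg (Subtype.val : ↥L → (Fin m → F)) h2
      calc u = (w : Fin m → F) := rfl
        _ = ↑(∑ k, cc.repr w k • cc k) := h3.symm
        _ = ∑ k, ((cc.repr w k : F)) • b k := by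
            rw [AddSubmonoidClass.coe_finset_sum]
            refine Finset.sum_congr rfl (fun k _ => ?_)
            rw [Submodule.coe_smul, hsmul, hbcc]
    have h5 : ⇑(b.repr u) = fun k => ((cc.repr w k : F)) := by
      rw [h1, Module.Basis.repr_sum_self]
    rw [h5]
    exact (cc.repr w i).2
  set Φa := (Matrix.toLinAlgEquiv (Pi.basisFun F (Fin m))).trans
    (LinearMap.toMatrixAlgEquiv b) with hΦa
  set Φ : Mat ≃* Mat := Φa.toRingEquiv.toMulEquiv with hΦ
  have hent : ∀ (w : Mat), (∀ u ∈ L, w.mulVec u ∈ L) → ∀ i j, ‖(Φ w) i j‖ ≤ 1 := by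
    intro w hw i j
    have h1 : Φ w = LinearMap.toMatrix b b
        (Matrix.toLin (Pi.basisFun F (Fin m)) (Pi.basisFun F (Fin m)) w) := rfl
    rw [h1, LinearMap.toMatrix_apply]
    have h2 : (Matrix.toLin (Pi.basisFun F (Fin m)) (Pi.basisFun F (Fin m)) w) (b j)
        = w.mulVec (b j) := by
      rw [Matrix.toLin_eq_toLin', Matrix.toLin'_apply]
    rw [h2]
    exact hrepr _ (hw _ (hbL j)) i
  set Y : GL (Fin m) F := Units.mapEquiv Φ x with hY
  have hYcoe : (Y : Mat) = Φ xM := rfl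
  have hYinv : ((Y⁻¹ : GL (Fin m) F) : Mat) = Φ xMinv := by
    rw [hY, ← map_inv (Units.mapEquiv Φ) x]
    rfl
  refine ⟨Y, ?_, ?_, ?_, ?_⟩
  · exact orderOf_injective (Units.mapEquiv Φ).toMonoidHom (MulEquiv.injective _) x
  · exact (Units.mapEquiv Φ).toMonoidHom.isOfFinOrder hx
  · intro i j
    rw [hYcoe]
    exact hent xM hxstab i j
  · intro i j
    rw [hYinv]
    exact hent xMinv hxinvstab i j

end ConjMain

end Stmt10


/-- For a non-Archimedean local field `F` (complete, nontrivially
normed, ultrametric, locally compact — equivalently complete discretely valued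
with finite residue field) and `m ≥ 1`, there is an integer `r ≥ 1` dividing
which is the order of every torsion element of `GL(m, F)`. -/
theorem stmt10 {F : Type*} [NontriviallyNormedField F] [CompleteSpace F]
    [IsUltrametricDist F] [LocallyCompactSpace F] (m : ℕ) (hm : 0 < m) :
    ∃ r : ℕ, 0 < r ∧ ∀ x : GL (Fin m) F, IsOfFinOrder x → orderOf x ∣ r := by
  haveI : NeZero m := ⟨hm.ne'⟩
  obtain ⟨r, hr, hbound⟩ := Stmt10.global_bound (F := F) (m := m)
  refine ⟨r, hr, ?_⟩
  intro x hx
  obtain ⟨Y, hord, hYfin, hY1, hY2⟩ := Stmt10.exists_conj_integral x hx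
  rw [← hord]
  exact hbound Y hYfin hY1 hY2
end

section
/- Let K be a global field (a finite extension of ℚ or of 𝔽_p(t)) of positive characteristic, and m a positive integer. Then there is an integer r such that the order of every torsion element of GL(m, K) divides r. -/
open Polynomial

/-- An element of `RatFunc k` integral over the field `k` is a constant. -/
theorem ratfunc_integral_constant {k : Type*} [Field k] {c : RatFunc k}
    (hc : IsIntegral k c) : ∃ a : k, algebraMap k (RatFunc k) a = c := by
  have h1 : IsIntegral (Polynomial k) c := hc.tower_top
  obtain ⟨P, hP⟩ := IsIntegrallyClosed.isIntegral_iff.mp h1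
  have h2 : IsIntegral k P :=
    IsIntegral.tower_bot (IsFractionRing.injective (Polynomial k) (RatFunc k)) (hP ▸ hc)
  have hdeg : P.natDegree = 0 := by
    by_contra hd
    have hd1 : 1 ≤ P.natDegree := Nat.one_le_iff_ne_zero.mpr hd
    set q := minpoly k P with hq
    have hqm : q.Monic := minpoly.monic h2
    have hq0 : 0 < q.natDegree := minpoly.natDegree_pos h2
    have haev : Polynomial.aeval P q = 0 := minpoly.aeval k P
    rw [Polynomial.aeval_eq_sum_range] at haev
    rw [Finset.sum_range_succ] at haev
    have hPd : (P : Polynomial k) ^ q.natDegree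
        = -∑ i ∈ Finset.range q.natDegree, q.coeff i • P ^ i := by
      rw [hqm.coeff_natDegree, one_smul] at haev
      linear_combination haev
    have hlt : ((∑ i ∈ Finset.range q.natDegree, q.coeff i • P ^ i : Polynomial k)).natDegree
        < q.natDegree * P.natDegree := by
      refine lt_of_le_of_lt (Polynomial.natDegree_sum_le _ _) ?_
      rw [Finset.fold_max_lt]
      refine ⟨Nat.mul_pos hq0 hd1, fun i hi => ?_⟩
      refine lt_of_le_of_lt (Polynomial.natDegree_smul_le _ _) ?_
      refine lt_of_le_of_lt (Polynomial.natDegree_pow_le) ?_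
      exact (Nat.mul_lt_mul_right (Nat.lt_of_lt_of_le Nat.zero_lt_one hd1)).mpr
        (Finset.mem_range.mp hi)
    have := congrArg Polynomial.natDegree hPd
    rw [Polynomial.natDegree_pow, Polynomial.natDegree_neg] at this
    omega
  refine ⟨P.coeff 0, ?_⟩
  rw [Polynomial.eq_C_of_natDegree_eq_zero hdeg] at hP
  rw [← hP, IsScalarTower.algebraMap_apply k (Polynomial k) (RatFunc k),
    Polynomial.algebraMap_eq]

theorem coeff_integral_of_dvd_X_pow_sub_one {k F : Type*} [Field k] [Field F] [Algebra k F]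
    {g : F[X]} (hg : g.Monic) {n : ℕ} (hn : 0 < n) (hdvd : g ∣ X ^ n - 1) (i : ℕ) :
    IsIntegral k (g.coeff i) := by
  classical
  set L := AlgebraicClosure F
  set gL := g.map (algebraMap F L) with hgL
  have hgLm : gL.Monic := hg.map _
  have hsplits : gL.Splits :=
    IsAlgClosed.splits gL
  have hprod : gL = (gL.roots.map fun a => X - C a).prod :=
    hsplits.eq_prod_roots_of_monic hgLm
  have hdvdL : gL ∣ X ^ n - 1 := by
    have := Polynomial.map_dvd (algebraMap F L) hdvd
    simpa using this
  have hroots : ∀ r ∈ gL.roots, r ∈ integralClosure k L := by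
    intro r hr
    have hr0 : gL.eval r = 0 := Polynomial.isRoot_of_mem_roots hr
    have hrn : r ^ n = 1 := by
      have := Polynomial.eval_eq_zero_of_dvd_of_eval_eq_zero hdvdL hr0
      simp only [eval_sub, eval_pow, eval_X, eval_one, sub_eq_zero] at this
      exact this
    exact ⟨(X : k[X]) ^ n - C 1, monic_X_pow_sub_C (1 : k) hn.ne', by simp [hrn]⟩
  -- coefficients of gL lie in the integral closure
  have hcard : gL.roots.card = gL.natDegree := (splits_iff_card_roots).mp hsplits
  have hcoeffL : ∀ j, gL.coeff j ∈ integralClosure k L := by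
    intro j
    by_cases hj : j ≤ gL.roots.card
    · rw [hprod, Multiset.prod_X_sub_C_coeff _ hj]
      refine mul_mem (pow_mem (neg_mem (one_mem _)) _) ?_
      rw [Multiset.esymm]
      refine Subalgebra.multiset_sum_mem _ (fun t ht => ?_)
      obtain ⟨u, hu, rfl⟩ := Multiset.mem_map.mp ht
      refine Subalgebra.multiset_prod_mem (S := integralClosure k L) (fun r hru => ?_)
      exact hroots r (Multiset.mem_of_le (Multiset.mem_powersetCard.mp hu).1 hru)
    · rw [Polynomial.coeff_eq_zero_of_natDegree_lt (by omega : gL.natDegree < j)]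
      exact Subalgebra.zero_mem _
  -- descend
  have h1 : IsIntegral k (algebraMap F L (g.coeff i)) := by
    have := hcoeffL i
    rw [hgL, Polynomial.coeff_map] at this
    exact this
  exact IsIntegral.tower_bot (algebraMap F L).injective h1

set_option maxHeartbeats 1000000 in
set_option synthInstance.maxHeartbeats 400000 in
theorem stmt11_aux (p : ℕ) [hp : Fact p.Prime]
    (K : Type*) [Field K] [CharP K p]
    [Algebra (RatFunc (ZMod p)) K] [FiniteDimensional (RatFunc (ZMod p)) K]
    (m : ℕ) (hm : 0 < m) :
    ∃ r : ℕ, 0 < r ∧ ∀ x : GL (Fin m) K, IsOfFinOrder x → orderOf x ∣ r := by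
  classical
  set F := RatFunc (ZMod p) with hF
  set A := Matrix (Fin m) (Fin m) K with hA
  haveI : Nonempty (Fin m) := ⟨⟨0, hm⟩⟩
  haveI : Module.Finite F A := Module.Finite.trans K A
  set N := Module.finrank F A with hN
  refine ⟨(p ^ N).factorial, Nat.factorial_pos _, fun x hx => ?_⟩
  set n := orderOf x with hn
  have hn0 : 0 < n := hx.orderOf_pos
  have hxn : (↑x : A) ^ n = 1 := by
    rw [← Units.val_pow_eq_pow_val, pow_orderOf_eq_one x, Units.val_one]
  have haev : (Polynomial.aeval (↑x : A)) ((X : F[X]) ^ n - C 1) = 0 := by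
    simp [hxn]
  have hint : IsIntegral F (↑x : A) := ⟨X ^ n - C 1, monic_X_pow_sub_C _ hn0.ne', haev⟩
  set g := minpoly F (↑x : A) with hg
  have hgM : g.Monic := minpoly.monic hint
  have hdeg : g.natDegree ≤ N := by
    have heq := minpoly.algHom_eq (Algebra.lmul F A) Algebra.lmul_injective (↑x : A)
    rw [hg, ← heq]
    calc (minpoly F (Algebra.lmul F A (↑x : A))).natDegree
        ≤ (LinearMap.charpoly (Algebra.lmul F A (↑x : A))).natDegree :=
          Polynomial.natDegree_le_of_dvd
            (LinearMap.minpoly_dvd_charpoly _)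
            (LinearMap.charpoly_monic _).ne_zero
      _ = N := LinearMap.charpoly_natDegree _
  have hdvd : g ∣ X ^ n - 1 := minpoly.dvd F _ (by simp [hxn])
  have hcoeff : ∀ i, g.coeff i ∈ Set.range (algebraMap (ZMod p) F) := fun i => by
    obtain ⟨a, ha⟩ := ratfunc_integral_constant
      (coeff_integral_of_dvd_X_pow_sub_one hgM hn0 hdvd i)
    exact ⟨a, ha⟩
  obtain ⟨h, hmap, hdegh, hmonich⟩ := Polynomial.lifts_and_natDegree_eq_and_monic
    ((Polynomial.lifts_iff_coeff_lifts g).mpr hcoeff) hgM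
  set d := g.natDegree with hd
  have hd0 : 0 < d := minpoly.natDegree_pos hint
  letI azA : Algebra (ZMod p) A :=
    RingHom.toAlgebra' ((algebraMap F A).comp (algebraMap (ZMod p) F))
      (fun c y => Algebra.commutes (algebraMap (ZMod p) F c) y)
  letI : IsScalarTower (ZMod p) F A :=
    IsScalarTower.of_algebraMap_eq'
      (rfl : algebraMap (ZMod p) A = (algebraMap F A).comp (algebraMap (ZMod p) F))
  have hrel : (Polynomial.aeval (↑x : A)) h = 0 := by
    rw [← Polynomial.aeval_map_algebraMap F, hmap, hg, minpoly.aeval]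
  set W := Submodule.span (ZMod p) (Set.range fun i : Fin d => (↑x : A) ^ (i : ℕ)) with hW
  have hgen : ∀ i : Fin d, (↑x : A) ^ (i : ℕ) ∈ W := fun i => Submodule.subset_span ⟨i, rfl⟩
  have hxd : (↑x : A) ^ d ∈ W := by
    rw [Polynomial.aeval_eq_sum_range, hdegh, Finset.sum_range_succ] at hrel
    have hcd : h.coeff d = 1 := by rw [← hdegh]; exact hmonich.coeff_natDegree
    rw [hcd, one_smul] at hrel
    have hxe : (↑x : A) ^ d = -∑ i ∈ Finset.range d, h.coeff i • (↑x : A) ^ i :=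
      eq_neg_of_add_eq_zero_right hrel
    rw [hxe]
    exact neg_mem (Submodule.sum_mem _ fun i hi =>
      Submodule.smul_mem _ _ (hgen ⟨i, Finset.mem_range.mp hi⟩))
  have hstep : ∀ a ∈ W, (↑x : A) * a ∈ W := by
    intro a ha
    induction ha using Submodule.span_induction with
    | mem b hb =>
        obtain ⟨i, rfl⟩ := hb
        by_cases hi : (i : ℕ) + 1 < d
        · rw [← pow_succ']
          exact hgen ⟨(i : ℕ) + 1, hi⟩
        · have hieq : (i : ℕ) + 1 = d := by omega
          rw [← pow_succ', hieq]
          exact hxd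
    | zero => rw [mul_zero]; exact zero_mem W
    | add a b _ _ ha hb => rw [mul_add]; exact add_mem ha hb
    | smul c a _ ha => rw [mul_smul_comm]; exact Submodule.smul_mem W c ha
  have hpow : ∀ k : ℕ, (↑x : A) ^ k ∈ W := by
    intro k
    induction k with
    | zero => simpa using hgen ⟨0, hd0⟩
    | succ k ih => rw [pow_succ']; exact hstep _ ih
  haveI : FiniteDimensional (ZMod p) W := FiniteDimensional.span_of_finite _ (Set.finite_range _)
  haveI : Finite W := Module.finite_of_finite (ZMod p)
  have hcardW : Nat.card W ≤ p ^ N := by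
    have h1 : Module.finrank (ZMod p) W ≤ d := by
      refine le_trans (finrank_span_le_card _) ?_
      rw [Set.toFinset_range]
      exact le_trans Finset.card_image_le (by simp)
    have h2 : Nat.card W = p ^ Module.finrank (ZMod p) W := by
      haveI : Fintype W := Fintype.ofFinite _
      rw [Nat.card_eq_fintype_card, Module.card_eq_pow_finrank (K := ZMod p) (V := W), ZMod.card]
    rw [h2]
    exact Nat.pow_le_pow_right hp.out.pos (le_trans h1 hdeg)
  have hnle : n ≤ Nat.card W := by
    have hinj : Function.Injective (fun k : Fin n =>
        (⟨(↑(x ^ (k : ℕ)) : A), by rw [Units.val_pow_eq_pow_val]; exact hpow _⟩ : W)) := by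
      intro j k hjk
      have : (x : GL (Fin m) K) ^ (j : ℕ) = x ^ (k : ℕ) :=
        Units.ext (by simpa using congrArg Subtype.val hjk)
      exact Fin.ext (pow_injOn_Iio_orderOf j.2 k.2 this)
    simpa using Nat.card_le_card_of_injective _ hinj
  exact Nat.dvd_factorial hn0 (le_trans hnle hcardW)

/-- Let `K` be a global field of positive characteristic, i.e. a
finite extension of `𝔽_p(t)`, and `m` a positive integer.  Then there is an
integer `r ≥ 1` such that the order of every torsion element of `GL(m, K)`
divides `r`. -/
theorem stmt11 (p : ℕ) [hp : Fact p.Prime]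
    (K : Type*) [Field K] [CharP K p]
    [Algebra (RatFunc (ZMod p)) K] [FiniteDimensional (RatFunc (ZMod p)) K]
    (m : ℕ) (hm : 0 < m) :
    ∃ r : ℕ, 0 < r ∧ ∀ x : GL (Fin m) K, IsOfFinOrder x → orderOf x ∣ r :=
  stmt11_aux p K m hm
end
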